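/- arXiv:1810.04612 — 3 statements merged into one kernel-verified Lean document; each statement's English description precedes it below -/
import Mathlib

section
/- Let Ĝ be a group with a surjective homomorphism π: Ĝ → {±1} and kernel G. Suppose given a family (A_g)_{g ∈ G} of complex vector spaces together with linear maps â_ω: A_g → A_{ω g^{π(ω)} ω⁻¹} for each ω ∈ Ĝ and g ∈ G (where g^{π(ω)} means g if π(ω) = 1 and g⁻¹ if π(ω) = −1), satisfying â_e = id and â_{ω₂} ∘ â_{ω₁} = â_{ω₂ω₁} on each A_g. Call a family a = (a_g ∈ A_g)_{g ∈ G} flat if â_h(a_g) = a_{h g h⁻¹} for all h, g ∈ G. For ς ∈ Ĝ∖G define p_ς(a)_g := â_ς(a_{ς⁻¹ g⁻¹ ς}) (note ς(ς⁻¹g⁻¹ς)⁻¹ς⁻¹ = g, so p_ς(a)_g ∈ A_g). Then: (a) if a is flat then p_ς(a) is flat; (b) p_ς(p_ς(a)) = a for every flat a; and (c) p_ς(a) = p_{ς′}(a) for any two odd elements ς, ς′ ∈ Ĝ∖G and every flat a. -/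
/-- For a ℤ₂-graded group `π : Ĝ → {±1}` with kernel `G`, `ς ∈ Ĝ` and `g ∈ G`, the
element `ς⁻¹ g⁻¹ ς` again lies in `G`. -/
def oddIdx {Ghat : Type*} [Group Ghat] (π : Ghat →* ℤˣ) (ς : Ghat) (g : π.ker) :
    π.ker :=
  ⟨ς⁻¹ * (g : Ghat)⁻¹ * ς, by
    have hg : π (g : Ghat) = 1 := MonoidHom.mem_ker.mp g.2
    rw [MonoidHom.mem_ker, map_mul, map_mul, map_inv, map_inv, hg, inv_one, mul_one,
      inv_mul_cancel]⟩

/-- For odd `ς` (i.e. `π ς = -1`) and `g ∈ G` one has `ς • (ς⁻¹g⁻¹ς)^{π(ς)} • ς⁻¹ = g`. -/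
lemma pmap_index {Ghat : Type*} [Group Ghat] (π : Ghat →* ℤˣ) (ς : Ghat)
    (hς : π ς = -1) (g : π.ker) :
    ς * ((oddIdx π ς g : Ghat)) ^ ((π ς : ℤˣ) : ℤ) * ς⁻¹ = (g : Ghat) := by
  rw [hς]
  show ς * (ς⁻¹ * (g : Ghat)⁻¹ * ς) ^ (((-1 : ℤˣ) : ℤ)) * ς⁻¹ = (g : Ghat)
  simp [zpow_neg, mul_assoc]

/-- The claim at the end of the proof of Proposition 4.7 of the paper. Let
`π : Ĝ → {±1}` be a ℤ₂-graded group with kernel `G`, let `(A_g)_{g ∈ G}` be a family of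
complex vector spaces equipped with linear maps `â_ω : A_g → A_{ω g^{π(ω)} ω⁻¹}` (recorded
here as maps `â ω g h p : A g →ₗ[ℂ] A h` indexed by a proof `p : ω g^{π(ω)} ω⁻¹ = h`)
satisfying `â_e = id` and `â_{ω₂} ∘ â_{ω₁} = â_{ω₂ω₁}`. Call `a = (a_g)` flat if
`â_h(a_g) = a_{hgh⁻¹}` for all `h, g ∈ G`, and for odd `ς` set
`p_ς(a)_g := â_ς(a_{ς⁻¹g⁻¹ς})`. Then: (a) `p_ς` preserves flatness; (b) `p_ς ∘ p_ς = id`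
on flat families; (c) `p_ς = p_{ς'}` on flat families, for any two odd `ς, ς'`. -/
theorem involution_on_flat_sections
    {Ghat : Type*} [Group Ghat] (π : Ghat →* ℤˣ) (hπ : Function.Surjective π)
    (A : π.ker → Type*) [∀ g, AddCommGroup (A g)] [∀ g, Module ℂ (A g)]
    (ahat : ∀ (ω : Ghat) (g h : π.ker),
      ω * (g : Ghat) ^ ((π ω : ℤˣ) : ℤ) * ω⁻¹ = (h : Ghat) → (A g →ₗ[ℂ] A h))
    (hid : ∀ (g : π.ker)
      (p : (1 : Ghat) * (g : Ghat) ^ ((π (1 : Ghat) : ℤˣ) : ℤ) * (1 : Ghat)⁻¹ = (g : Ghat)),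
      ahat 1 g g p = LinearMap.id)
    (hcomp : ∀ (ω₁ ω₂ : Ghat) (g h k : π.ker)
      (p₁ : ω₁ * (g : Ghat) ^ ((π ω₁ : ℤˣ) : ℤ) * ω₁⁻¹ = (h : Ghat))
      (p₂ : ω₂ * (h : Ghat) ^ ((π ω₂ : ℤˣ) : ℤ) * ω₂⁻¹ = (k : Ghat))
      (p₃ : (ω₂ * ω₁) * (g : Ghat) ^ ((π (ω₂ * ω₁) : ℤˣ) : ℤ) * (ω₂ * ω₁)⁻¹ = (k : Ghat)),
      (ahat ω₂ h k p₂).comp (ahat ω₁ g h p₁) = ahat (ω₂ * ω₁) g k p₃)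
    (ς ς' : Ghat) (hς : π ς = -1) (hς' : π ς' = -1) :
    letI Flat : (∀ g, A g) → Prop := fun a =>
      ∀ (h g k : π.ker)
        (p : (h : Ghat) * (g : Ghat) ^ ((π (h : Ghat) : ℤˣ) : ℤ) * (h : Ghat)⁻¹ = (k : Ghat)),
        ahat (h : Ghat) g k p (a g) = a k
    letI pmap : ∀ (σ : Ghat), π σ = -1 → (∀ g, A g) → (∀ g, A g) := fun σ hσ a g =>
      ahat σ (oddIdx π σ g) g (pmap_index π σ hσ g) (a (oddIdx π σ g))
    (∀ a, Flat a → Flat (pmap ς hς a)) ∧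
      (∀ a, Flat a → pmap ς hς (pmap ς hς a) = a) ∧
      (∀ a, Flat a → pmap ς hς a = pmap ς' hς' a) := by
  -- composing indices
  have mkp : ∀ (ω₁ ω₂ : Ghat) (g h k : π.ker)
      (_ : ω₁ * (g : Ghat) ^ ((π ω₁ : ℤˣ) : ℤ) * ω₁⁻¹ = (h : Ghat))
      (_ : ω₂ * (h : Ghat) ^ ((π ω₂ : ℤˣ) : ℤ) * ω₂⁻¹ = (k : Ghat)),
      (ω₂ * ω₁) * (g : Ghat) ^ ((π (ω₂ * ω₁) : ℤˣ) : ℤ) * (ω₂ * ω₁)⁻¹ = (k : Ghat) := by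
    intro ω₁ ω₂ g h k p₁ p₂
    rw [← p₂, ← p₁, map_mul]
    rcases Int.units_eq_one_or (π ω₂) with h2 | h2 <;>
      rcases Int.units_eq_one_or (π ω₁) with h1 | h1 <;>
      simp [h1, h2, mul_assoc]
  have key : ∀ (ω₁ ω₂ : Ghat) (g h k : π.ker)
      (p₁ : ω₁ * (g : Ghat) ^ ((π ω₁ : ℤˣ) : ℤ) * ω₁⁻¹ = (h : Ghat))
      (p₂ : ω₂ * (h : Ghat) ^ ((π ω₂ : ℤˣ) : ℤ) * ω₂⁻¹ = (k : Ghat))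
      (p₃ : (ω₂ * ω₁) * (g : Ghat) ^ ((π (ω₂ * ω₁) : ℤˣ) : ℤ) * (ω₂ * ω₁)⁻¹ = (k : Ghat))
      (x : A g),
      ahat ω₂ h k p₂ (ahat ω₁ g h p₁ x) = ahat (ω₂ * ω₁) g k p₃ x :=
    fun ω₁ ω₂ g h k p₁ p₂ p₃ x => LinearMap.congr_fun (hcomp ω₁ ω₂ g h k p₁ p₂ p₃) x
  have hcg : ∀ (ω ω' : Ghat) (g k : π.ker)
      (p : ω * (g : Ghat) ^ ((π ω : ℤˣ) : ℤ) * ω⁻¹ = (k : Ghat))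
      (p' : ω' * (g : Ghat) ^ ((π ω' : ℤˣ) : ℤ) * ω'⁻¹ = (k : Ghat))
      (x : A g), ω = ω' → ahat ω g k p x = ahat ω' g k p' x := by
    rintro ω ω' g k p p' x rfl; rfl
  refine ⟨?_, ?_, ?_⟩
  · -- (a) flatness preserved
    intro a ha h g k p
    have hh : π (h : Ghat) = 1 := MonoidHom.mem_ker.mp h.2
    have pk : (h : Ghat) * (g : Ghat) * (h : Ghat)⁻¹ = (k : Ghat) := by
      rw [hh] at p; simpa using p
    have hmem : ς⁻¹ * (h : Ghat) * ς ∈ π.ker := by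
      simp [MonoidHom.mem_ker, hh, hς]
    set h' : π.ker := ⟨ς⁻¹ * (h : Ghat) * ς, hmem⟩ with hh'
    have hh1 : π (h' : Ghat) = 1 := MonoidHom.mem_ker.mp h'.2
    have p' : (h' : Ghat) * ((oddIdx π ς g : Ghat)) ^ ((π (h' : Ghat) : ℤˣ) : ℤ)
        * (h' : Ghat)⁻¹ = (oddIdx π ς k : Ghat) := by
      rw [hh1]
      show (ς⁻¹ * (h : Ghat) * ς) * (ς⁻¹ * (g : Ghat)⁻¹ * ς) ^ ((( 1 : ℤˣ) : ℤ))
        * (ς⁻¹ * (h : Ghat) * ς)⁻¹ = ς⁻¹ * (k : Ghat)⁻¹ * ς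
      rw [← pk]
      simp only [Units.val_one, zpow_one]
      group
    show ahat (h : Ghat) g k p (ahat ς (oddIdx π ς g) g (pmap_index π ς hς g)
        (a (oddIdx π ς g))) = ahat ς (oddIdx π ς k) k (pmap_index π ς hς k)
        (a (oddIdx π ς k))
    rw [← ha h' (oddIdx π ς g) (oddIdx π ς k) p',
      key ς (h : Ghat) (oddIdx π ς g) g k (pmap_index π ς hς g) p
        (mkp ς (h : Ghat) (oddIdx π ς g) g k (pmap_index π ς hς g) p),
      key (h' : Ghat) ς (oddIdx π ς g) (oddIdx π ς k) k p' (pmap_index π ς hς k)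
        (mkp (h' : Ghat) ς (oddIdx π ς g) (oddIdx π ς k) k p' (pmap_index π ς hς k))]
    apply hcg
    show (h : Ghat) * ς = ς * (ς⁻¹ * (h : Ghat) * ς)
    group
  · -- (b) involution
    intro a ha
    funext g
    show ahat ς (oddIdx π ς g) g (pmap_index π ς hς g)
        (ahat ς (oddIdx π ς (oddIdx π ς g)) (oddIdx π ς g)
          (pmap_index π ς hς (oddIdx π ς g)) (a (oddIdx π ς (oddIdx π ς g)))) = a g
    have p₃ := mkp ς ς (oddIdx π ς (oddIdx π ς g)) (oddIdx π ς g) g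
      (pmap_index π ς hς (oddIdx π ς g)) (pmap_index π ς hς g)
    rw [key ς ς (oddIdx π ς (oddIdx π ς g)) (oddIdx π ς g) g
      (pmap_index π ς hς (oddIdx π ς g)) (pmap_index π ς hς g) p₃]
    have hmem : ς * ς ∈ π.ker := by simp [MonoidHom.mem_ker, hς]
    exact ha ⟨ς * ς, hmem⟩ (oddIdx π ς (oddIdx π ς g)) g p₃
  · -- (c) independence of the odd element
    intro a ha
    funext g
    show ahat ς (oddIdx π ς g) g (pmap_index π ς hς g) (a (oddIdx π ς g))
      = ahat ς' (oddIdx π ς' g) g (pmap_index π ς' hς' g) (a (oddIdx π ς' g))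
    have hmem : ς'⁻¹ * ς ∈ π.ker := by simp [MonoidHom.mem_ker, hς, hς']
    set h'' : π.ker := ⟨ς'⁻¹ * ς, hmem⟩ with hh''
    have hh1 : π (h'' : Ghat) = 1 := MonoidHom.mem_ker.mp h''.2
    have p'' : (h'' : Ghat) * ((oddIdx π ς g : Ghat)) ^ ((π (h'' : Ghat) : ℤˣ) : ℤ)
        * (h'' : Ghat)⁻¹ = (oddIdx π ς' g : Ghat) := by
      rw [hh1]
      show (ς'⁻¹ * ς) * (ς⁻¹ * (g : Ghat)⁻¹ * ς) ^ (((1 : ℤˣ) : ℤ)) * (ς'⁻¹ * ς)⁻¹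
        = ς'⁻¹ * (g : Ghat)⁻¹ * ς'
      simp only [Units.val_one, zpow_one]
      group
    rw [← ha h'' (oddIdx π ς g) (oddIdx π ς' g) p'',
      key (h'' : Ghat) ς' (oddIdx π ς g) (oddIdx π ς' g) g p'' (pmap_index π ς' hς' g)
        (mkp (h'' : Ghat) ς' (oddIdx π ς g) (oddIdx π ς' g) g p'' (pmap_index π ς' hς' g))]
    apply hcg
    show ς = ς' * (ς'⁻¹ * ς)
    group
end

section
/- Let Ĝ be a group with a surjective homomorphism π: Ĝ → {±1} and kernel G, let λ̂ be a normalized π-twisted 2-cocycle on Ĝ valued in ℂˣ, and let λ be its restriction to G. Let (V, φ) be a λ-twisted representation of G and let ς ∈ Ĝ∖G be odd. Then φ^ς is again a λ-twisted representation of G on the dual space V^∨; that is, φ^ς(g) ∘ φ^ς(h) = λ(g,h) · φ^ς(gh) for all g, h ∈ G. (This is the statement that the duality functor P^ς: Rep^λ(G)^op → Rep^λ(G), (V,φ) ↦ (V^∨, φ^ς), of Section 4.5 of the paper is well defined.) -/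
/-- Conjugation `g ↦ ς g ς⁻¹` preserves the kernel of `π`. -/
def kconj {Ghat : Type*} [Group Ghat] (π : Ghat →* ℤˣ) (ς : Ghat) (g : π.ker) :
    π.ker :=
  ⟨ς * (g : Ghat) * ς⁻¹, by
    have hg : π (g : Ghat) = 1 := MonoidHom.mem_ker.mp g.2
    rw [MonoidHom.mem_ker, map_mul, map_mul, map_inv, hg, mul_one, mul_inv_cancel]⟩

/-- The reflection-twisted transgression `τ^ref_π(λ̂)([ς]g)` of the paper:
`τ_ς(g) = λ̂(g⁻¹,g)⁻¹ · λ̂(ςg⁻¹ς⁻¹, ς) · λ̂(ς, g⁻¹)⁻¹`. -/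
def tau {Ghat : Type*} [Group Ghat] (lam : Ghat → Ghat → ℂˣ)
    (ς g : Ghat) : ℂˣ :=
  (lam g⁻¹ g)⁻¹ * lam (ς * g⁻¹ * ς⁻¹) ς * (lam ς g⁻¹)⁻¹

/-- The dualization construction of Section 4.5 of the paper: given an assignment
`φ` of linear endomorphisms of `V` to elements of `G = ker π`, the assignment
`φ^ς(g) := τ_ς(g)⁻¹ · (φ(ς g⁻¹ ς⁻¹))^∨` of linear endomorphisms of the dual `V^∨`. -/
noncomputable def dualTw {Ghat : Type*} [Group Ghat] (π : Ghat →* ℤˣ) (lam : Ghat → Ghat → ℂˣ)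
    (ς : Ghat) {V : Type*} [AddCommGroup V] [Module ℂ V]
    (φ : π.ker → (V →ₗ[ℂ] V)) (g : π.ker) :
    Module.Dual ℂ V →ₗ[ℂ] Module.Dual ℂ V :=
  (((tau lam ς (g : Ghat))⁻¹ : ℂˣ) : ℂ) • LinearMap.dualMap (φ (kconj π ς g⁻¹))

/-! Dualizing reverses composition, and `g ↦ ς g⁻¹ ς⁻¹` reverses products as well, so
`φ^ς(g) ∘ φ^ς(h) = τ(g)⁻¹ τ(h)⁻¹ λ(ς h⁻¹ ς⁻¹, ς g⁻¹ ς⁻¹) · φ(ς (gh)⁻¹ ς⁻¹)^∨`. Everything thus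
reduces to the scalar identity `λ(ς h⁻¹ ς⁻¹, ς g⁻¹ ς⁻¹) τ(gh) = λ(g,h) τ(g) τ(h)` in `ℂˣ`. The odd
cocycle condition at `(ς, g⁻¹, g)` rewrites `τ(g)` as `λ(ς g⁻¹, g) λ(ς g⁻¹ ς⁻¹, ς)`, an even one
turns this into `λ(ς, g) λ(ς g⁻¹ ς⁻¹, ς g)`, and three more instances of the cocycle condition
then give the identity. -/

def IsTwistedCocycle {Ghat A : Type*} [Group Ghat] [CommGroup A] (π : Ghat →* ℤˣ)
    (lam : Ghat → Ghat → A) : Prop :=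
  ∀ ω₁ ω₂ ω₃ : Ghat,
    lam ω₂ ω₃ ^ ((π ω₁ : ℤˣ) : ℤ) * lam ω₁ (ω₂ * ω₃) = lam (ω₁ * ω₂) ω₃ * lam ω₁ ω₂

namespace IsTwistedCocycle

variable {Ghat A : Type*} [Group Ghat] [CommGroup A] {π : Ghat →* ℤˣ}
  {lam : Ghat → Ghat → A}

theorem eq_of_even (hlam : IsTwistedCocycle π lam) {ω₁ : Ghat} (h₁ : π ω₁ = 1) (ω₂ ω₃ : Ghat) :
    lam ω₂ ω₃ * lam ω₁ (ω₂ * ω₃) = lam (ω₁ * ω₂) ω₃ * lam ω₁ ω₂ := by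
  simpa [h₁] using hlam ω₁ ω₂ ω₃

theorem eq_of_odd (hlam : IsTwistedCocycle π lam) {ω₁ : Ghat} (h₁ : π ω₁ = -1) (ω₂ ω₃ : Ghat) :
    (lam ω₂ ω₃)⁻¹ * lam ω₁ (ω₂ * ω₃) = lam (ω₁ * ω₂) ω₃ * lam ω₁ ω₂ := by
  simpa [h₁] using hlam ω₁ ω₂ ω₃

theorem apply_one_right (hlam : IsTwistedCocycle π lam) (hnorm : lam 1 1 = 1) (ω : Ghat) :
    lam ω 1 = 1 := by
  simpa [hnorm] using hlam ω 1 1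

end IsTwistedCocycle

section Transgression

variable {Ghat : Type*} [Group Ghat] {π : Ghat →* ℤˣ} {lam : Ghat → Ghat → ℂˣ}
  (hlam : IsTwistedCocycle π lam) (hnorm : lam 1 1 = 1) {ς : Ghat} (hς : π ς = -1)
include hlam hnorm hς

theorem tau_eq_of_odd (g : Ghat) :
    tau lam ς g = lam (ς * g⁻¹) g * lam (ς * g⁻¹ * ς⁻¹) ς := by
  have h := hlam.eq_of_odd hς g⁻¹ g
  rw [inv_mul_cancel, hlam.apply_one_right hnorm, mul_one] at h
  rw [tau, h, mul_right_comm, mul_inv_cancel_right]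

theorem tau_eq_of_odd_of_even {g : Ghat} (hg : π g = 1) :
    tau lam ς g = lam ς g * lam (ς * g⁻¹ * ς⁻¹) (ς * g) := by
  have hc : π (ς * g⁻¹ * ς⁻¹) = 1 := by simp [hg]
  have h := hlam.eq_of_even hc ς g
  rw [show ς * g⁻¹ * ς⁻¹ * ς = ς * g⁻¹ by group] at h
  rw [tau_eq_of_odd hlam hnorm hς, ← h]

theorem lam_conj_mul_tau_mul {g h : Ghat} (hg : π g = 1) (hh : π h = 1) :
    lam (ς * h⁻¹ * ς⁻¹) (ς * g⁻¹ * ς⁻¹) * tau lam ς (g * h)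
      = lam g h * tau lam ς g * tau lam ς h := by
  have τg := tau_eq_of_odd_of_even hlam hnorm hς hg
  have τh := tau_eq_of_odd hlam hnorm hς h
  have τgh := tau_eq_of_odd_of_even hlam hnorm hς (π.ker.mul_mem hg hh)
  rw [show ς * (g * h)⁻¹ * ς⁻¹ = (ς * h⁻¹ * ς⁻¹) * (ς * g⁻¹ * ς⁻¹) by group,
    ← mul_assoc ς] at τgh
  have e₁ := hlam.eq_of_odd hς g h
  set cg := ς * g⁻¹ * ς⁻¹ with hcg
  set ch := ς * h⁻¹ * ς⁻¹ with hch
  have e₂ := hlam.eq_of_even (ω₁ := ch) (by simp [hch, hh]) cg (ς * g)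
  have e₃ := hlam.eq_of_even (ω₁ := ch * cg) (by simp [hch, hcg, hg, hh]) (ς * g) h
  rw [show cg * (ς * g) = ς by rw [hcg]; group] at e₂
  rw [show ch * cg * (ς * g) = ς * h⁻¹ by rw [hcg, hch]; group] at e₃
  calc lam ch cg * tau lam ς (g * h)
      = lam ch cg * (lam g h * (lam (ς * g) h * lam ς g)) * lam (ch * cg) (ς * g * h) := by
        rw [τgh, ← inv_mul_eq_iff_eq_mul.mp e₁, ← mul_assoc]
    _ = lam g h * lam ς g * lam ch cg * (lam (ς * g) h * lam (ch * cg) (ς * g * h)) := by ac_rfl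
    _ = lam g h * lam ς g * lam ch cg * (lam (ς * h⁻¹) h * lam (ch * cg) (ς * g)) := by rw [e₃]
    _ = lam g h * lam ς g * lam (ς * h⁻¹) h * (lam (ch * cg) (ς * g) * lam ch cg) := by ac_rfl
    _ = lam g h * lam ς g * lam (ς * h⁻¹) h * (lam cg (ς * g) * lam ch ς) := by rw [← e₂]
    _ = lam g h * tau lam ς g * tau lam ς h := by rw [τg, τh]; ac_rfl

end Transgression

theorem kconj_mul {Ghat : Type*} [Group Ghat] (π : Ghat →* ℤˣ) (ς : Ghat) (a b : π.ker) :
    kconj π ς (a * b) = kconj π ς a * kconj π ς b :=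
  Subtype.ext <| by simp only [kconj, Subgroup.coe_mul]; group

theorem LinearMap.dualMap_smul {R M₁ M₂ : Type*} [CommSemiring R] [AddCommMonoid M₁] [Module R M₁]
    [AddCommMonoid M₂] [Module R M₂] (c : R) (f : M₁ →ₗ[R] M₂) :
    (c • f).dualMap = c • f.dualMap :=
  map_smul Module.Dual.transpose c f

theorem dual_twisted_representation_general
    {Ghat : Type*} [Group Ghat] (π : Ghat →* ℤˣ)
    (lam : Ghat → Ghat → ℂˣ) (hnorm : lam 1 1 = 1)
    (hcoc : ∀ ω₁ ω₂ ω₃ : Ghat,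
      lam ω₂ ω₃ ^ ((π ω₁ : ℤˣ) : ℤ) * lam ω₁ (ω₂ * ω₃) = lam (ω₁ * ω₂) ω₃ * lam ω₁ ω₂)
    {V : Type*} [AddCommGroup V] [Module ℂ V]
    (φ : π.ker → (V ≃ₗ[ℂ] V))
    (hφ : ∀ g h : π.ker, (φ g).toLinearMap ∘ₗ (φ h).toLinearMap
      = ((lam (g : Ghat) (h : Ghat) : ℂˣ) : ℂ) • (φ (g * h)).toLinearMap)
    (ς : Ghat) (hς : π ς = -1) :
    ∀ g h : π.ker,
      dualTw π lam ς (fun k => (φ k).toLinearMap) g ∘ₗ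
          dualTw π lam ς (fun k => (φ k).toLinearMap) h
        = ((lam (g : Ghat) (h : Ghat) : ℂˣ) : ℂ) •
            dualTw π lam ς (fun k => (φ k).toLinearMap) (g * h) := by
  intro g h
  have key := lam_conj_mul_tau_mul hcoc hnorm hς g.2 h.2
  have scalar : (tau lam ς g)⁻¹ * (tau lam ς h)⁻¹ * lam (kconj π ς h⁻¹) (kconj π ς g⁻¹)
      = lam g h * (tau lam ς (g * h))⁻¹ := by
    rw [eq_mul_inv_iff_mul_eq, mul_assoc _ (lam _ _), ← mul_inv, inv_mul_eq_iff_eq_mul]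
    exact key.trans (mul_rotate _ _ _)
  simp only [dualTw]
  rw [LinearMap.smul_comp, LinearMap.comp_smul, LinearMap.dualMap_comp_dualMap, hφ,
    LinearMap.dualMap_smul, ← kconj_mul, ← mul_inv_rev, smul_smul, smul_smul, smul_smul]
  exact congrArg (· • _) (congrArg Units.val scalar)

/-- Well-definedness of the duality functor `P^ς` of Section 4.5 of the paper: if
`(V, φ)` is a `λ`-twisted representation of `G` and `ς` is odd, then `φ^ς` is again a
`λ`-twisted representation of `G` on the dual space `V^∨`:
`φ^ς(g) ∘ φ^ς(h) = λ(g,h) · φ^ς(gh)`. -/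
theorem dual_twisted_representation
    {Ghat : Type*} [Group Ghat] (π : Ghat →* ℤˣ) (hπ : Function.Surjective π)
    (lam : Ghat → Ghat → ℂˣ) (hnorm : lam 1 1 = 1)
    (hcoc : ∀ ω₁ ω₂ ω₃ : Ghat,
      lam ω₂ ω₃ ^ ((π ω₁ : ℤˣ) : ℤ) * lam ω₁ (ω₂ * ω₃) = lam (ω₁ * ω₂) ω₃ * lam ω₁ ω₂)
    {V : Type*} [AddCommGroup V] [Module ℂ V] [FiniteDimensional ℂ V]
    (φ : π.ker → (V ≃ₗ[ℂ] V))
    (hφ : ∀ g h : π.ker, (φ g).toLinearMap ∘ₗ (φ h).toLinearMap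
      = ((lam (g : Ghat) (h : Ghat) : ℂˣ) : ℂ) • (φ (g * h)).toLinearMap)
    (ς : Ghat) (hς : π ς = -1) :
    ∀ g h : π.ker,
      dualTw π lam ς (fun k => (φ k).toLinearMap) g ∘ₗ
          dualTw π lam ς (fun k => (φ k).toLinearMap) h
        = ((lam (g : Ghat) (h : Ghat) : ℂˣ) : ℂ) •
            dualTw π lam ς (fun k => (φ k).toLinearMap) (g * h) :=
  dual_twisted_representation_general π lam hnorm hcoc φ hφ ς hς
end

section
/- Let Ĝ be a finite group with a surjective homomorphism π: Ĝ → {±1} and kernel G, let λ̂ be a normalized π-twisted 2-cocycle on Ĝ valued in ℂˣ, and let λ be its restriction to G. Call a λ-twisted representation (V, φ) irreducible if V ≠ 0 and the only subspaces of V invariant under all φ(g), g ∈ G, are 0 and V. Let (V₁, φ₁), …, (V_r, φ_r) be a complete set of pairwise non-isomorphic irreducible λ-twisted representations of G (i.e. every irreducible λ-twisted representation of G is isomorphic to exactly one of them), and define ν(V_i) := (1/|G|) · Σ_{ς ∈ Ĝ∖G} λ̂(ς,ς) · tr(φ_i(ς²)). Then Σ_{ς ∈ Ĝ∖G with ς²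 = e} λ̂(ς,ς) = Σ_{i=1}^{r} ν(V_i) · dim V_i, an identity of complex numbers. -/
open scoped Classical

/-- A `λ`-twisted (finite-dimensional, complex) representation of a group `G`, for a
cocycle `lam : G → G → ℂˣ`: a pair `(V, φ)` with `φ(g) ∘ φ(h) = λ(g,h) • φ(gh)`. -/
structure TwRep (G : Type*) [Group G] (lam : G → G → ℂˣ) where
  V : Type
  [acg : AddCommGroup V]
  [mod : Module ℂ V]
  [fd : FiniteDimensional ℂ V]
  φ : G → V ≃ₗ[ℂ] V
  hrep : ∀ g h : G, (φ g).toLinearMap ∘ₗ (φ h).toLinearMap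
    = ((lam g h : ℂˣ) : ℂ) • (φ (g * h)).toLinearMap

attribute [instance] TwRep.acg TwRep.mod TwRep.fd

/-- Irreducibility of a twisted representation: `V ≠ 0` and the only invariant subspaces
are `0` and `V`. -/
def TwRep.Irred {G : Type*} [Group G] {lam : G → G → ℂˣ} (ρ : TwRep G lam) : Prop :=
  (∃ v : ρ.V, v ≠ 0) ∧
    ∀ W : Submodule ℂ ρ.V, (∀ (g : G), ∀ w ∈ W, ρ.φ g w ∈ W) → W = ⊥ ∨ W = ⊤

/-- Isomorphism of twisted representations: an intertwining linear equivalence. -/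
def TwRep.Iso {G : Type*} [Group G] {lam : G → G → ℂˣ} (ρ σ : TwRep G lam) : Prop :=
  ∃ e : ρ.V ≃ₗ[ℂ] σ.V, ∀ (g : G) (v : ρ.V), e (ρ.φ g v) = σ.φ g (e v)

/-- The square `ς²` of any element of `Ĝ` lies in the kernel of `π : Ĝ → {±1}`. -/
def sqk {Ghat : Type*} [Group Ghat] (π : Ghat →* ℤˣ) (ς : Ghat) : π.ker :=
  ⟨ς * ς, by rw [MonoidHom.mem_ker, map_mul]; exact Int.units_mul_self (π ς)⟩

/-!
Write `χ_i(k) = tr φ_i(k)` and `d_i = dim V_i`. Exchanging the sums on the right, it becomes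
`|G|⁻¹ Σ_{ς odd} λ̂(ς,ς) Σ_i d_i χ_i(ς²)`, and `Σ_i d_i χ_i(k) = |G|·[k = 1]` is the character of
the twisted regular representation `ℂ^λ[G]`, which keeps exactly the odd `ς` with `ς² = e`.

The regular character identity is the twisted version of the classical argument: by Maschke and
Schur (both go through verbatim for projective representations), every twisted representation `ρ`
has character `Σ_i dim Hom_G(ρ, V_i) χ_i`, and `Hom_G(ℂ^λ[G], V) ≅ V` by evaluation at `e_1`.
-/

theorem LinearMap.trace_eq_trace_restrict_add_trace_restrict {K V : Type*} [Field K]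
    [AddCommGroup V] [Module K V] [FiniteDimensional K V] {f : V →ₗ[K] V}
    {W W' : Submodule K V} (hW : ∀ w ∈ W, f w ∈ W) (hW' : ∀ w ∈ W', f w ∈ W')
    (hWW' : IsCompl W W') :
    LinearMap.trace K V f =
      LinearMap.trace K W (f.restrict hW) + LinearMap.trace K W' (f.restrict hW') := by
  have hint := (DirectSum.isInternal_submodule_iff_isCompl ![W, W'] (i := 0) (j := 1)
    (by decide) (by ext k; fin_cases k <;> simp)).mpr hWW'
  rw [LinearMap.trace_eq_sum_trace_restrict hint (f := f)
    (fun k => by fin_cases k; exacts [hW, hW']), Fin.sum_univ_two]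
  rfl

def IsTwoCocycle {G : Type*} [Group G] (lam : G → G → ℂˣ) : Prop :=
  ∀ a b c : G, lam b c * lam a (b * c) = lam (a * b) c * lam a b

namespace IsTwoCocycle

variable {G : Type*} [Group G] {lam : G → G → ℂˣ}

theorem lam_one_left (hc : IsTwoCocycle lam) (hll : lam 1 1 = 1) (g : G) : lam 1 g = 1 := by
  simpa [hll] using hc 1 1 g

theorem lam_one_right (hc : IsTwoCocycle lam) (hll : lam 1 1 = 1) (g : G) : lam g 1 = 1 := by
  simpa [hll] using (hc g 1 1).symm

end IsTwoCocycle

namespace TwRep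

open LinearMap Module

variable {G : Type*} [Group G] {lam : G → G → ℂˣ}

theorem φ_φ_apply (ρ : TwRep G lam) (g h : G) (v : ρ.V) :
    ρ.φ g (ρ.φ h v) = ((lam g h : ℂˣ) : ℂ) • ρ.φ (g * h) v := by
  simpa using LinearMap.ext_iff.mp (ρ.hrep g h) v

theorem φ_one (hll : lam 1 1 = 1) (ρ : TwRep G lam) (v : ρ.V) : ρ.φ 1 v = v :=
  (ρ.φ 1).injective (by simpa [hll] using φ_φ_apply ρ 1 1 v)

def Invariant (ρ : TwRep G lam) (W : Submodule ℂ ρ.V) : Prop :=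
  ∀ g : G, ∀ w ∈ W, ρ.φ g w ∈ W

/-- An injective endomorphism of the finite-dimensional `W` is onto. -/
theorem Invariant.symm_mem {ρ : TwRep G lam} {W : Submodule ℂ ρ.V} (hW : ρ.Invariant W)
    (g : G) {w : ρ.V} (hw : w ∈ W) : (ρ.φ g).symm w ∈ W := by
  have hsurj : Function.Surjective ((ρ.φ g).toLinearMap.restrict (hW g)) :=
    LinearMap.injective_iff_surjective.mp fun a b hab =>
      Subtype.ext ((ρ.φ g).injective (congrArg Subtype.val hab))
  obtain ⟨u, hu⟩ := hsurj ⟨w, hw⟩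
  have hu' : ρ.φ g u = w := congrArg Subtype.val hu
  rw [← hu', LinearEquiv.symm_apply_apply]
  exact u.2

noncomputable def restrict (ρ : TwRep G lam) (W : Submodule ℂ ρ.V) (hW : ρ.Invariant W) :
    TwRep G lam where
  V := W
  φ g :=
    { (ρ.φ g).toLinearMap.restrict (hW g) with
      invFun := fun w => ⟨(ρ.φ g).symm w, hW.symm_mem g w.2⟩
      left_inv := fun w => Subtype.ext ((ρ.φ g).symm_apply_apply w)
      right_inv := fun w => Subtype.ext ((ρ.φ g).apply_symm_apply w) }
  hrep g h := by
    ext w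
    simpa using φ_φ_apply ρ g h w

theorem trace_φ_eq_add_of_isCompl (ρ : TwRep G lam) {W W' : Submodule ℂ ρ.V}
    (hW : ρ.Invariant W) (hW' : ρ.Invariant W') (hWW' : IsCompl W W') (g : G) :
    trace ℂ ρ.V (ρ.φ g) = trace ℂ (ρ.restrict W hW).V ((ρ.restrict W hW).φ g) +
      trace ℂ (ρ.restrict W' hW').V ((ρ.restrict W' hW').φ g) :=
  trace_eq_trace_restrict_add_trace_restrict (hW g) (hW' g) hWW'

/-- Maschke: the average of the conjugates `(φ g)⁻¹ ∘ p ∘ φ g` of a projection `p` onto `W`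
intertwines, because conjugation by `φ g` does not see the scalars `lam`. -/
theorem exists_invariant_isCompl [Fintype G] (ρ : TwRep G lam) {W : Submodule ℂ ρ.V}
    (hW : ρ.Invariant W) : ∃ W' : Submodule ℂ ρ.V, ρ.Invariant W' ∧ IsCompl W W' := by
  obtain ⟨U, hU⟩ := W.exists_isCompl
  let p : ρ.V →ₗ[ℂ] ρ.V := W.subtype ∘ₗ W.projectionOnto U hU
  let P : ρ.V →ₗ[ℂ] ρ.V :=
    (Fintype.card G : ℂ)⁻¹ • ∑ g : G, (ρ.φ g).symm.toLinearMap ∘ₗ p ∘ₗ (ρ.φ g).toLinearMap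
  have hP : ∀ v, P v = (Fintype.card G : ℂ)⁻¹ • ∑ g : G, (ρ.φ g).symm (p (ρ.φ g v)) :=
    fun v => by simp [P, LinearMap.sum_apply]
  have hpW : ∀ v, p v ∈ W := fun v => (W.projectionOnto U hU v).2
  have hPW : ∀ v, P v ∈ W := fun v => by
    rw [hP]
    exact W.smul_mem _ (W.sum_mem fun g _ => hW.symm_mem g (hpW _))
  have hP_fix : ∀ w : W, LinearMap.codRestrict W P hPW w = w := by
    intro w
    ext
    have hp : ∀ g : G, (ρ.φ g).symm (p (ρ.φ g w)) = w := fun g => by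
      simp [p, Submodule.projectionOnto_apply_left hU ⟨_, hW g w w.2⟩]
    simp only [codRestrict_apply, hP, hp, Finset.sum_const, Finset.card_univ]
    rw [← Nat.cast_smul_eq_nsmul ℂ, smul_smul,
      inv_mul_cancel₀ (Nat.cast_ne_zero.mpr Fintype.card_ne_zero), one_smul]
  have hP_comm : ∀ h v, P (ρ.φ h v) = ρ.φ h (P v) := by
    intro h v
    have hterm : ∀ g : G, (ρ.φ g).symm (p (ρ.φ g (ρ.φ h v)))
        = ρ.φ h ((ρ.φ (g * h)).symm (p (ρ.φ (g * h) v))) := fun g => by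
      apply (ρ.φ g).injective
      rw [LinearEquiv.apply_symm_apply, φ_φ_apply, φ_φ_apply, LinearEquiv.apply_symm_apply,
        map_smul]
    rw [hP, hP, Finset.sum_congr rfl fun g _ => hterm g, ← map_sum, map_smul]
    exact congrArg _ (congrArg _
      (Equiv.sum_comp (Equiv.mulRight h) fun g => (ρ.φ g).symm (p (ρ.φ g v))))
  refine ⟨ker (LinearMap.codRestrict W P hPW), fun g v hv => ?_, isCompl_of_proj hP_fix⟩
  rw [mem_ker] at hv ⊢
  ext
  simpa [hP_comm] using congrArg Subtype.val hv

def intertwiners (ρ σ : TwRep G lam) : Submodule ℂ (ρ.V →ₗ[ℂ] σ.V) where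
  carrier := {f | ∀ g v, f (ρ.φ g v) = σ.φ g (f v)}
  add_mem' ha hb g v := by simp [ha g v, hb g v]
  zero_mem' g v := by simp
  smul_mem' c f hf g v := by simp [hf g v]

theorem Iso.symm {ρ σ : TwRep G lam} (h : ρ.Iso σ) : σ.Iso ρ := by
  obtain ⟨e, he⟩ := h
  exact ⟨e.symm, fun g v => e.injective (by simp [he])⟩

theorem Iso.trans {ρ σ τ : TwRep G lam} (h₁ : ρ.Iso σ) (h₂ : σ.Iso τ) : ρ.Iso τ := by
  obtain ⟨e₁, he₁⟩ := h₁
  obtain ⟨e₂, he₂⟩ := h₂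
  exact ⟨e₁.trans e₂, fun g v => by simp [he₁, he₂]⟩

theorem Iso.trace_φ_eq {ρ σ : TwRep G lam} (h : ρ.Iso σ) (g : G) :
    trace ℂ ρ.V (ρ.φ g) = trace ℂ σ.V (σ.φ g) := by
  obtain ⟨e, he⟩ := h
  rw [← trace_conj' (ρ.φ g).toLinearMap e]
  congr 1
  ext v
  simp [he]

theorem Irred.nontrivial {ρ : TwRep G lam} (hρ : ρ.Irred) : Nontrivial ρ.V :=
  let ⟨v, hv⟩ := hρ.1
  ⟨⟨v, 0, hv⟩⟩

theorem Irred.ker_eq_bot_or_eq_top {ρ σ : TwRep G lam} (hρ : ρ.Irred) {f : ρ.V →ₗ[ℂ] σ.V}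
    (hf : f ∈ intertwiners ρ σ) : ker f = ⊥ ∨ ker f = ⊤ :=
  hρ.2 _ fun g w hw => by rw [mem_ker] at hw ⊢; rw [hf g w, hw, map_zero]

theorem Irred.range_eq_bot_or_eq_top {ρ σ : TwRep G lam} (hσ : σ.Irred) {f : ρ.V →ₗ[ℂ] σ.V}
    (hf : f ∈ intertwiners ρ σ) : range f = ⊥ ∨ range f = ⊤ :=
  hσ.2 _ fun g w => by rintro ⟨v, rfl⟩; exact ⟨ρ.φ g v, hf g v⟩

theorem Irred.iso_of_mem_intertwiners {ρ σ : TwRep G lam} (hρ : ρ.Irred) (hσ : σ.Irred)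
    {f : ρ.V →ₗ[ℂ] σ.V} (hf : f ∈ intertwiners ρ σ) (hf0 : f ≠ 0) : ρ.Iso σ := by
  have hker : ker f = ⊥ := (hρ.ker_eq_bot_or_eq_top hf).resolve_right (hf0 ∘ ker_eq_top.mp)
  have hrange : range f = ⊤ :=
    (hσ.range_eq_bot_or_eq_top hf).resolve_left (hf0 ∘ range_eq_bot.mp)
  exact ⟨.ofBijective f ⟨ker_eq_bot.mp hker, range_eq_top.mp hrange⟩, hf⟩

/-- Schur's lemma: an eigenspace of an intertwiner is invariant, hence everything. -/
theorem Irred.exists_eq_smul_id {ρ : TwRep G lam} (hρ : ρ.Irred) {f : ρ.V →ₗ[ℂ] ρ.V}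
    (hf : f ∈ intertwiners ρ ρ) : ∃ c : ℂ, f = c • LinearMap.id := by
  have := hρ.nontrivial
  obtain ⟨c, hc⟩ := Module.End.exists_eigenvalue f
  obtain ⟨v, hv, hv0⟩ := hc.exists_hasEigenvector
  have hfc : f - c • LinearMap.id ∈ intertwiners ρ ρ :=
    sub_mem hf (Submodule.smul_mem _ c fun _ _ => rfl)
  refine ⟨c, sub_eq_zero.mp (ker_eq_top.mp ?_)⟩
  refine (hρ.ker_eq_bot_or_eq_top hfc).resolve_left fun h => hv0 ?_
  rw [← Submodule.mem_bot ℂ, ← h, mem_ker, LinearMap.sub_apply, Module.End.mem_eigenspace_iff.mp hv]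
  simp

theorem finrank_intertwiners_of_iso {ρ σ : TwRep G lam} (hρ : ρ.Irred) (h : ρ.Iso σ) :
    finrank ℂ (intertwiners ρ σ) = 1 := by
  obtain ⟨e, he⟩ := h
  have := hρ.nontrivial
  have hspan : intertwiners ρ σ = ℂ ∙ e.toLinearMap := by
    refine le_antisymm (fun f hf => ?_) ((Submodule.span_singleton_le_iff_mem _ _).mpr he)
    have hef : e.symm.toLinearMap ∘ₗ f ∈ intertwiners ρ ρ := fun g v => by
      simp only [comp_apply, LinearEquiv.coe_coe, hf g v]
      exact e.injective (by simp [he])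
    obtain ⟨c, hc⟩ := hρ.exists_eq_smul_id hef
    refine Submodule.mem_span_singleton.mpr ⟨c, ?_⟩
    ext v
    simpa using congrArg e (LinearMap.congr_fun hc v).symm
  rw [hspan, finrank_span_singleton]
  obtain ⟨v, hv⟩ := exists_ne (0 : ρ.V)
  exact fun h0 => hv (e.map_eq_zero_iff.mp (LinearMap.congr_fun h0 v))

theorem finrank_intertwiners_of_not_iso {ρ σ : TwRep G lam} (hρ : ρ.Irred) (hσ : σ.Irred)
    (h : ¬ ρ.Iso σ) : finrank ℂ (intertwiners ρ σ) = 0 := by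
  rw [Submodule.finrank_eq_zero, Submodule.eq_bot_iff]
  exact fun f hf => by_contra (h ∘ hρ.iso_of_mem_intertwiners hσ hf)

theorem finrank_intertwiners_of_subsingleton (ρ σ : TwRep G lam) [Subsingleton ρ.V] :
    finrank ℂ (intertwiners ρ σ) = 0 :=
  Submodule.finrank_eq_zero.mpr (Subsingleton.elim _ _)

theorem finrank_intertwiners_eq_add_of_isCompl (ρ σ : TwRep G lam) {W W' : Submodule ℂ ρ.V}
    (hW : ρ.Invariant W) (hW' : ρ.Invariant W') (hWW' : IsCompl W W') :
    finrank ℂ (intertwiners ρ σ) = finrank ℂ (intertwiners (ρ.restrict W hW) σ) +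
      finrank ℂ (intertwiners (ρ.restrict W' hW') σ) := by
  let R : intertwiners ρ σ →ₗ[ℂ]
      intertwiners (ρ.restrict W hW) σ × intertwiners (ρ.restrict W' hW') σ :=
    { toFun f := (⟨f.1 ∘ₗ W.subtype, fun g w => f.2 g w.1⟩,
        ⟨f.1 ∘ₗ W'.subtype, fun g w => f.2 g w.1⟩)
      map_add' _ _ := rfl
      map_smul' _ _ := rfl }
  have hR : Function.Bijective R := by
    refine ⟨fun f f' hff' => Subtype.ext (ext_on_codisjoint hWW'.codisjoint
      (fun w hw => ?_) (fun w hw => ?_)), fun ⟨f₁, f₂⟩ => ?_⟩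
    · exact LinearMap.congr_fun (congrArg Subtype.val (congrArg Prod.fst hff')) ⟨w, hw⟩
    · exact LinearMap.congr_fun (congrArg Subtype.val (congrArg Prod.snd hff')) ⟨w, hw⟩
    have hF : ofIsCompl hWW' f₁.1 f₂.1 ∈ intertwiners ρ σ := fun g v => by
      refine LinearMap.congr_fun (ext_on_codisjoint (f := ofIsCompl hWW' f₁.1 f₂.1 ∘ₗ ρ.φ g)
        (g := (σ.φ g).toLinearMap ∘ₗ ofIsCompl hWW' f₁.1 f₂.1) hWW'.codisjoint
        (fun w hw => ?_) (fun w hw => ?_)) v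
      · exact (ofIsCompl_apply_left hWW' ⟨_, hW g w hw⟩).trans
          ((f₁.2 g ⟨w, hw⟩).trans (congrArg _ (ofIsCompl_apply_left hWW' ⟨w, hw⟩).symm))
      · exact (ofIsCompl_apply_right hWW' ⟨_, hW' g w hw⟩).trans
          ((f₂.2 g ⟨w, hw⟩).trans (congrArg _ (ofIsCompl_apply_right hWW' ⟨w, hw⟩).symm))
    refine ⟨⟨_, hF⟩, Prod.ext (Subtype.ext ?_) (Subtype.ext ?_)⟩ <;> ext w
    · exact ofIsCompl_apply_left hWW' w
    · exact ofIsCompl_apply_right hWW' w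
  rw [(LinearEquiv.ofBijective R hR).finrank_eq, Module.finrank_prod]

section Decomposition

variable {r : ℕ} {reps : Fin r → TwRep G lam}

theorem finrank_intertwiners_eq_ite (hirr : ∀ i, (reps i).Irred)
    (hdist : ∀ i j, i ≠ j → ¬ (reps i).Iso (reps j)) {ρ : TwRep G lam} (hρ : ρ.Irred)
    {i₀ : Fin r} (hi₀ : ρ.Iso (reps i₀)) (i : Fin r) :
    finrank ℂ (intertwiners ρ (reps i)) = if i = i₀ then 1 else 0 := by
  split_ifs with h
  · exact h ▸ finrank_intertwiners_of_iso hρ hi₀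
  · exact finrank_intertwiners_of_not_iso hρ (hirr i)
      fun hi => hdist i₀ i (Ne.symm h) (hi₀.symm.trans hi)

/-- Every `ρ` is, at the level of characters, the sum of the `reps i` with multiplicity
`dim Hom(ρ, reps i)`: induction on `dim ρ`, splitting off an invariant subspace by Maschke. -/
theorem trace_φ_eq_sum_finrank_intertwiners_mul [Fintype G] (hirr : ∀ i, (reps i).Irred)
    (hdist : ∀ i j, i ≠ j → ¬ (reps i).Iso (reps j))
    (hcompl : ∀ ρ : TwRep G lam, ρ.Irred → ∃ i, ρ.Iso (reps i)) (ρ : TwRep G lam) (g : G) :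
    trace ℂ ρ.V (ρ.φ g) =
      ∑ i, (finrank ℂ (intertwiners ρ (reps i)) : ℂ) * trace ℂ (reps i).V ((reps i).φ g) := by
  induction hn : finrank ℂ ρ.V using Nat.strong_induction_on generalizing ρ with
  | _ n ih =>
    by_cases hρ : ρ.Irred
    · obtain ⟨i₀, hi₀⟩ := hcompl ρ hρ
      simp [finrank_intertwiners_eq_ite hirr hdist hρ hi₀, hi₀.trace_φ_eq]
    rcases subsingleton_or_nontrivial ρ.V with hV | hV
    · simp [finrank_intertwiners_of_subsingleton, Subsingleton.elim (ρ.φ g).toLinearMap 0]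
    obtain ⟨W, hW, hW_bot, hW_top⟩ : ∃ W, ρ.Invariant W ∧ W ≠ ⊥ ∧ W ≠ ⊤ := by
      simpa [Irred, exists_ne, Invariant, not_or] using hρ
    obtain ⟨W', hW', hWW'⟩ := ρ.exists_invariant_isCompl hW
    have hdim := Submodule.finrank_add_eq_of_isCompl hWW'
    have hltW : finrank ℂ W < n := hn ▸ Submodule.finrank_lt hW_top
    have hltW' : finrank ℂ W' < n := by
      have := Submodule.finrank_eq_zero.not.mpr hW_bot
      omega
    rw [ρ.trace_φ_eq_add_of_isCompl hW hW' hWW', ih _ hltW (ρ.restrict W hW) rfl,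
      ih _ hltW' (ρ.restrict W' hW') rfl, ← Finset.sum_add_distrib]
    refine Finset.sum_congr rfl fun i _ => ?_
    rw [finrank_intertwiners_eq_add_of_isCompl ρ _ hW hW' hWW']
    push_cast
    ring

end Decomposition

section Regular

variable [Fintype G]

/-- Indexing by `Fin (card G)` rather than `G` keeps the carrier in `Type`, whatever
universe `G` lives in. -/
noncomputable def regularBasis : Basis G ℂ (Fin (Fintype.card G) → ℂ) :=
  (Pi.basisFun ℂ _).reindex (Fintype.equivFin G).symm

variable (lam) in
noncomputable def regularAction (g : G) : Module.End ℂ (Fin (Fintype.card G) → ℂ) :=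
  regularBasis.constr ℂ fun h => ((lam g h : ℂˣ) : ℂ) • regularBasis (g * h)

variable (lam) in
@[simp]
theorem regularAction_basis (g h : G) :
    regularAction lam g (regularBasis h) = ((lam g h : ℂˣ) : ℂ) • regularBasis (g * h) := by
  simp [regularAction]

theorem regularAction_mul (hc : IsTwoCocycle lam) (g h : G) :
    regularAction lam g ∘ₗ regularAction lam h = ((lam g h : ℂˣ) : ℂ) • regularAction lam (g * h) :=
  regularBasis.ext fun k => by
    simp only [comp_apply, LinearMap.smul_apply, regularAction_basis, map_smul, smul_smul,
      mul_assoc]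
    rw [← Units.val_mul, ← Units.val_mul, hc g h k, mul_comm]

noncomputable abbrev regular (hc : IsTwoCocycle lam) : TwRep G lam where
  V := Fin (Fintype.card G) → ℂ
  φ g := .ofLinearMap (regularAction lam g)
    (regularBasis.constr ℂ fun k => ((lam g (g⁻¹ * k) : ℂˣ) : ℂ)⁻¹ • regularBasis (g⁻¹ * k))
    (regularBasis.ext fun k => by simp [smul_smul])
    (regularBasis.ext fun h => by simp [smul_smul])
  hrep := regularAction_mul hc

theorem trace_regular (hc : IsTwoCocycle lam) (hll : lam 1 1 = 1) (k : G) :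
    trace ℂ (regular hc).V ((regular hc).φ k) = if k = 1 then (Fintype.card G : ℂ) else 0 := by
  change trace ℂ _ (regularAction lam k) = _
  rw [trace_eq_matrix_trace ℂ regularBasis, Matrix.trace]
  simp only [Matrix.diag_apply, toMatrix_apply, regularAction_basis, map_smul, Basis.repr_self,
    Finsupp.smul_apply, Finsupp.single_apply, mul_eq_right]
  split_ifs with hk
  · simp [hk, hc.lam_one_left hll]
  · simp

theorem finrank_intertwiners_regular (hc : IsTwoCocycle lam) (hll : lam 1 1 = 1)
    (ρ : TwRep G lam) : finrank ℂ (intertwiners (regular hc) ρ) = finrank ℂ ρ.V := by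
  have hφ1 : ∀ g, (regular hc).φ g (regularBasis 1) = regularBasis g := fun g => by
    change regularAction lam g _ = _
    simp [hc.lam_one_right hll]
  let F (v : ρ.V) : (regular hc).V →ₗ[ℂ] ρ.V := regularBasis.constr ℂ fun g => ρ.φ g v
  have hFb : ∀ v g, F v (regularBasis g) = ρ.φ g v := fun v g => regularBasis.constr_basis ℂ _ g
  have hF : ∀ v, F v ∈ intertwiners (regular hc) ρ := fun v g => by
    refine LinearMap.congr_fun (f := F v ∘ₗ ((regular hc).φ g).toLinearMap)
      (g := (ρ.φ g).toLinearMap ∘ₗ F v) (regularBasis.ext fun h => ?_)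
    change F v (regularAction lam g (regularBasis h)) = ρ.φ g (F v (regularBasis h))
    rw [regularAction_basis, map_smul, hFb, hFb, φ_φ_apply]
  let e : intertwiners (regular hc) ρ ≃ₗ[ℂ] ρ.V :=
    { toFun f := f.1 (regularBasis 1)
      map_add' _ _ := rfl
      map_smul' _ _ := rfl
      invFun v := ⟨F v, hF v⟩
      left_inv f := Subtype.ext <| regularBasis.ext fun g => by
        change F _ (regularBasis g) = f.1 (regularBasis g)
        rw [hFb, ← f.2 g, hφ1]
      right_inv v := (hFb v 1).trans (φ_one hll ρ v) }
  exact e.finrank_eq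

end Regular

/-- The twisted regular representation contains each `reps i` exactly `dim (reps i)` times. -/
theorem sum_finrank_mul_trace_φ [Fintype G] (hc : IsTwoCocycle lam) (hll : lam 1 1 = 1)
    {r : ℕ} {reps : Fin r → TwRep G lam} (hirr : ∀ i, (reps i).Irred)
    (hdist : ∀ i j, i ≠ j → ¬ (reps i).Iso (reps j))
    (hcompl : ∀ ρ : TwRep G lam, ρ.Irred → ∃ i, ρ.Iso (reps i)) (k : G) :
    ∑ i, (finrank ℂ (reps i).V : ℂ) * trace ℂ (reps i).V ((reps i).φ k) =
      if k = 1 then (Fintype.card G : ℂ) else 0 := by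
  rw [← trace_regular hc hll k, trace_φ_eq_sum_finrank_intertwiners_mul hirr hdist hcompl]
  simp_rw [finrank_intertwiners_regular hc hll]

end TwRep

theorem isTwoCocycle_restrict_ker {Ghat : Type*} [Group Ghat] {π : Ghat →* ℤˣ}
    {lam : Ghat → Ghat → ℂˣ}
    (hcoc : ∀ ω₁ ω₂ ω₃ : Ghat,
      lam ω₂ ω₃ ^ ((π ω₁ : ℤˣ) : ℤ) * lam ω₁ (ω₂ * ω₃) = lam (ω₁ * ω₂) ω₃ * lam ω₁ ω₂) :
    IsTwoCocycle fun g h : π.ker => lam g h := fun a b c => by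
  simpa [MonoidHom.mem_ker.mp a.2] using hcoc a b c

theorem sqk_eq_one_iff {Ghat : Type*} [Group Ghat] (π : Ghat →* ℤˣ) (ς : Ghat) :
    sqk π ς = 1 ↔ ς * ς = 1 :=
  Subtype.ext_iff

theorem projective_plane_partition_function_general
    {Ghat : Type*} [Group Ghat] [Fintype Ghat]
    (π : Ghat →* ℤˣ)
    (lam : Ghat → Ghat → ℂˣ) (hnorm : lam 1 1 = 1)
    (hcoc : ∀ ω₁ ω₂ ω₃ : Ghat,
      lam ω₂ ω₃ ^ ((π ω₁ : ℤˣ) : ℤ) * lam ω₁ (ω₂ * ω₃) = lam (ω₁ * ω₂) ω₃ * lam ω₁ ω₂)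
    (r : ℕ) (reps : Fin r → TwRep π.ker (fun g h => lam (g : Ghat) (h : Ghat)))
    (hirr : ∀ i, (reps i).Irred)
    (hdist : ∀ i j, i ≠ j → ¬ (reps i).Iso (reps j))
    (hcompl : ∀ ρ : TwRep π.ker (fun g h => lam (g : Ghat) (h : Ghat)),
      ρ.Irred → ∃ i, ρ.Iso (reps i)) :
    ∑ ς ∈ Finset.univ.filter (fun ς : Ghat => π ς = -1 ∧ ς * ς = 1),
        ((lam ς ς : ℂˣ) : ℂ)
      = ∑ i : Fin r,
          ((Nat.card π.ker : ℂ)⁻¹ *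
              ∑ ς ∈ Finset.univ.filter (fun ς : Ghat => π ς = -1),
                ((lam ς ς : ℂˣ) : ℂ) *
                  LinearMap.trace ℂ (reps i).V ((reps i).φ (sqk π ς)).toLinearMap) *
            (Module.finrank ℂ (reps i).V : ℂ) := by
  have : Fintype π.ker := Fintype.ofFinite _
  have hcard : (Fintype.card π.ker : ℂ) ≠ 0 := Nat.cast_ne_zero.mpr Fintype.card_ne_zero
  have horth := TwRep.sum_finrank_mul_trace_φ (isTwoCocycle_restrict_ker hcoc) hnorm
    hirr hdist hcompl
  rw [← Finset.filter_filter, Finset.sum_filter]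
  calc _ = ∑ ς ∈ Finset.univ.filter (fun ς : Ghat => π ς = -1), ((lam ς ς : ℂˣ) : ℂ) *
        ((Nat.card π.ker : ℂ)⁻¹ * ∑ i, (Module.finrank ℂ (reps i).V : ℂ) *
          LinearMap.trace ℂ (reps i).V ((reps i).φ (sqk π ς)).toLinearMap) := by
        refine Finset.sum_congr rfl fun ς _ => ?_
        rw [horth, Nat.card_eq_fintype_card]
        simp only [sqk_eq_one_iff]
        split_ifs
        · rw [inv_mul_cancel₀ hcard, mul_one]
        · rw [mul_zero, mul_zero]
    _ = _ := by
        simp_rw [Finset.mul_sum, Finset.sum_mul]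
        rw [Finset.sum_comm]
        exact Finset.sum_congr rfl fun _ _ => Finset.sum_congr rfl fun _ _ => by ring

/-- The identity of Section 4.5 of the paper, obtained by computing the twisted unoriented
Dijkgraaf–Witten partition function of `ℝP²` in two ways: for a finite ℤ₂-graded group
`π : Ĝ → {±1}` with kernel `G` and a normalized `π`-twisted 2-cocycle `λ̂`, the signed
count `Σ_{ς odd, ς² = e} λ̂(ς,ς)` equals `Σ_i ν(V_i)·dim V_i`, the sum over a complete
set of irreducible `λ`-twisted representations of `G` of the `(Ĝ,λ̂)`-twisted
Frobenius–Schur indicator `ν(V_i) = (1/|G|) Σ_{ς odd} λ̂(ς,ς)·tr φ_i(ς²)` times the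
dimension. -/
theorem projective_plane_partition_function
    {Ghat : Type*} [Group Ghat] [Fintype Ghat]
    (π : Ghat →* ℤˣ) (hπ : Function.Surjective π)
    (lam : Ghat → Ghat → ℂˣ) (hnorm : lam 1 1 = 1)
    (hcoc : ∀ ω₁ ω₂ ω₃ : Ghat,
      lam ω₂ ω₃ ^ ((π ω₁ : ℤˣ) : ℤ) * lam ω₁ (ω₂ * ω₃) = lam (ω₁ * ω₂) ω₃ * lam ω₁ ω₂)
    (r : ℕ) (reps : Fin r → TwRep π.ker (fun g h => lam (g : Ghat) (h : Ghat)))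
    (hirr : ∀ i, (reps i).Irred)
    (hdist : ∀ i j, i ≠ j → ¬ (reps i).Iso (reps j))
    (hcompl : ∀ ρ : TwRep π.ker (fun g h => lam (g : Ghat) (h : Ghat)),
      ρ.Irred → ∃ i, ρ.Iso (reps i)) :
    ∑ ς ∈ Finset.univ.filter (fun ς : Ghat => π ς = -1 ∧ ς * ς = 1),
        ((lam ς ς : ℂˣ) : ℂ)
      = ∑ i : Fin r,
          ((Nat.card π.ker : ℂ)⁻¹ *
              ∑ ς ∈ Finset.univ.filter (fun ς : Ghat => π ς = -1),
                ((lam ς ς : ℂˣ) : ℂ) *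
                  LinearMap.trace ℂ (reps i).V ((reps i).φ (sqk π ς)).toLinearMap) *
            (Module.finrank ℂ (reps i).V : ℂ) :=
  projective_plane_partition_function_general π lam hnorm hcoc r reps hirr hdist hcompl
end
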